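/- arXiv:1404.6411 — 3 statements merged into one kernel-verified Lean document; each statement's English description precedes it below -/
import Mathlib

section
/- Let 0 < δ, θ, and ε ∈ (0,1) with εθ < 1 - δ + εδ and (1-ε)δ + εθ < 1. Let φ, h : ℝ → ℂ be functions (Laplace transforms) with |φ(s)| ≤ 1 and |h(s)| ≤ 1 for all s ≥ 0, and suppose φ satisfies φ(s) · (1 - (1-ε)δ·p(s)) = 1 - (1-ε)δ for some function p, i.e. φ(s) = (1-(1-ε)δ)/(1-(1-ε)δ p(s)). Then for every s ≥ 0, (1-(1-ε)δ-εθ)/(1-(1-ε)δ p(s) - εθ h(s)) = φ(s) + Σ_{n=1}^∞ (εθ/(1-δ+εδ))^n [φ(s)^{n+1} h(s)^n - φ(s)^n h(s)^{n-1}], and the series converges absolutely. -/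
open Filter

/-- The transform identity underlying the discard expansion of the ruin probability. -/
theorem discard_expansion
    (δ θ ε : ℝ) (hδ : 0 < δ) (hθ : 0 < θ) (hε : ε ∈ Set.Ioo (0 : ℝ) 1)
    (hconv : ε * θ < 1 - δ + ε * δ) (hstab : (1 - ε) * δ + ε * θ < 1)
    (φ h p : ℝ → ℂ)
    (hφ1 : ∀ s : ℝ, 0 ≤ s → ‖φ s‖ ≤ 1) (hh1 : ∀ s : ℝ, 0 ≤ s → ‖h s‖ ≤ 1)
    (hφ : ∀ s : ℝ, 0 ≤ s →
      φ s * (1 - (((1 - ε) * δ : ℝ) : ℂ) * p s) = (((1 - (1 - ε) * δ : ℝ)) : ℂ))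
    (s : ℝ) (hs : 0 ≤ s) :
    ((((1 - (1 - ε) * δ - ε * θ : ℝ)) : ℂ) /
        (1 - (((1 - ε) * δ : ℝ) : ℂ) * p s - ((ε * θ : ℝ) : ℂ) * h s)
      = φ s + ∑' n : ℕ,
          (((ε * θ / (1 - δ + ε * δ) : ℝ)) : ℂ) ^ (n + 1) *
            ((φ s) ^ (n + 2) * (h s) ^ (n + 1) - (φ s) ^ (n + 1) * (h s) ^ n)) ∧
    Summable (fun n : ℕ =>
      ‖(((ε * θ / (1 - δ + ε * δ) : ℝ)) : ℂ) ^ (n + 1) *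
          ((φ s) ^ (n + 2) * (h s) ^ (n + 1) - (φ s) ^ (n + 1) * (h s) ^ n)‖) := by
  obtain ⟨hε0, hε1⟩ := hε
  set r : ℝ := ε * θ / (1 - δ + ε * δ) with hrdef
  have hden : (0:ℝ) < 1 - δ + ε * δ := by nlinarith
  have hr0 : 0 < r := div_pos (by positivity) hden
  have hr1 : r < 1 := (div_lt_one hden).mpr hconv
  set F := φ s with hF
  set H := h s with hH
  have hF1 : ‖F‖ ≤ 1 := hφ1 s hs
  have hH1 : ‖H‖ ≤ 1 := hh1 s hs
  set x : ℂ := (r : ℂ) * F * H with hxdef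
  have hx : ‖x‖ < 1 := by
    calc ‖x‖ = ‖(r:ℂ)‖ * ‖F‖ * ‖H‖ := by simp [hxdef, norm_mul]
    _ ≤ r * 1 * 1 := by
        have : ‖(r:ℂ)‖ = r := by simp [abs_of_pos hr0]
        rw [this]
        gcongr <;> first | exact hF1 | exact hH1 | positivity
    _ < 1 := by simpa using hr1
  have hterm : ∀ n : ℕ, (r:ℂ) ^ (n + 1) * (F ^ (n + 2) * H ^ (n + 1) - F ^ (n + 1) * H ^ n)
      = ((r:ℂ) * F * (F * H - 1)) * x ^ n := by
    intro n
    rw [hxdef]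
    ring
  have hsumgeo : Summable (fun n : ℕ => ‖x‖ ^ n) :=
    summable_geometric_of_lt_one (norm_nonneg x) hx
  have hsum2 : Summable (fun n : ℕ =>
      ‖(r:ℂ) ^ (n + 1) * (F ^ (n + 2) * H ^ (n + 1) - F ^ (n + 1) * H ^ n)‖) := by
    simp_rw [hterm, norm_mul, norm_pow]
    exact (hsumgeo.mul_left _)
  refine ⟨?_, hsum2⟩
  have htsum : (∑' n : ℕ, (r:ℂ) ^ (n + 1) * (F ^ (n + 2) * H ^ (n + 1) - F ^ (n + 1) * H ^ n))
      = ((r:ℂ) * F * (F * H - 1)) * (1 - x)⁻¹ := by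
    simp_rw [hterm]
    rw [tsum_mul_left, tsum_geometric_of_norm_lt_one hx]
  rw [htsum]
  -- nonvanishing facts
  have hapos : (0:ℝ) < 1 - (1 - ε) * δ := by nlinarith
  have haC : ((1 - (1 - ε) * δ : ℝ) : ℂ) ≠ 0 := by
    exact_mod_cast (ne_of_gt hapos)
  have hFne : F ≠ 0 := by
    intro h0
    have := hφ s hs
    rw [← hF, h0, zero_mul] at this
    exact haC this.symm
  have h1x : (1:ℂ) - x ≠ 0 := by
    intro h0
    have : x = 1 := by linear_combination -h0
    rw [this] at hx
    simp at hx
  have hr2R : (1 - (1 - ε) * δ) * r = ε * θ := by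
    rw [hrdef]
    field_simp
    ring
  have hr2 : ((1 - (1 - ε) * δ : ℝ) : ℂ) * (r : ℂ) = ((ε * θ : ℝ) : ℂ) := by
    exact_mod_cast hr2R
  have key : F * (1 - (((1 - ε) * δ : ℝ) : ℂ) * p s - ((ε * θ : ℝ) : ℂ) * H)
      = ((1 - (1 - ε) * δ : ℝ) : ℂ) * (1 - (r : ℂ) * F * H) := by
    linear_combination hφ s hs + F * H * hr2
  have hD : (1 - (((1 - ε) * δ : ℝ) : ℂ) * p s - ((ε * θ : ℝ) : ℂ) * H) ≠ 0 := by
    intro h0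
    rw [h0, mul_zero] at key
    have : ((1 - (1 - ε) * δ : ℝ) : ℂ) * (1 - x) = 0 := by rw [hxdef]; exact key.symm
    exact (mul_ne_zero haC h1x) this
  rw [div_eq_iff hD]
  have hbc : ((1 - (1 - ε) * δ - ε * θ : ℝ) : ℂ)
      = ((1 - (1 - ε) * δ : ℝ) : ℂ) * (1 - (r : ℂ)) := by
    have h0 : (1 - (1 - ε) * δ - ε * θ) = (1 - (1 - ε) * δ) * (1 - r) := by
      linear_combination hr2R
    rw [h0]
    push_cast
    ring
  have hinv : (1 - x) * (1 - x)⁻¹ = 1 := mul_inv_cancel₀ h1x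
  rw [hbc]
  linear_combination (-1 - (r : ℂ) * (F * H - 1) * (1 - x)⁻¹) * key
    - (r : ℂ) * (F * H - 1) * ((1 - (1 - ε) * δ : ℝ) : ℂ) * hinv
end

section
/- Let F be a probability distribution function on [0,∞) and for n ≥ 1 define α_n = sup_{u ≥ 0} (1 - F^{*n}(u))/(1 - F(u)), where F^{*n} is the n-fold convolution of F (assume 1 - F(u) > 0 for all u). Suppose α_2 < ∞ and α_2 ≥ 2. Then for all n ≥ 1, α_{n+1} ≤ 1 + α_n(α_2 - 1), and consequently α_n ≤ α_2ⁿ for all n ≥ 1. -/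
/-! Write `F̄ₙ(u) = F^{*n}(u, ∞)`. Conditioning on the last summand,
`F̄ₙ₊₁(u) = ∫ F̄ₙ(u - x) dF(x)`. On `x > u` the integrand is at most `1`, contributing at most
`F̄₁(u)`; on `x ≤ u` it is at most `αₙ F̄₁(u - x)`. For `n = 1` the same splitting is exact, because
`F̄₁ = 1` on `(-∞, 0)`, so `∫_{x ≤ u} F̄₁(u - x) dF(x) = F̄₂(u) - F̄₁(u) ≤ (α₂ - 1) F̄₁(u)`.
Hence `αₙ₊₁ ≤ 1 + αₙ (α₂ - 1)`, and induction from `α₁ ≤ 1 ≤ α₂` gives `αₙ ≤ α₂ⁿ`. -/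

open MeasureTheory Filter Set ENNReal

/-- `n`-fold convolution of a measure on `ℝ` (with `μ^{*0} = δ₀`). -/
noncomputable def convPow (μ : Measure ℝ) : ℕ → Measure ℝ
  | 0 => Measure.dirac 0
  | n + 1 => Measure.conv (convPow μ n) μ

noncomputable def tailRatioSup (μ : Measure ℝ) (n : ℕ) : ℝ≥0∞ :=
  ⨆ u : {u : ℝ // 0 ≤ u}, convPow μ n (Ioi u.1) / μ (Ioi u.1)

lemma MeasureTheory.Measure.conv_apply_Ioi (μ ν : Measure ℝ) [SFinite μ] [SFinite ν] (u : ℝ) :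
    (μ.conv ν) (Ioi u) = ∫⁻ x, ν (Ioi (u - x)) ∂μ := by
  rw [Measure.conv, Measure.map_apply (by fun_prop) measurableSet_Ioi,
    Measure.prod_apply ((show Measurable fun x : ℝ × ℝ => x.1 + x.2 by fun_prop) measurableSet_Ioi)]
  refine lintegral_congr fun x => ?_
  congr 1
  ext y
  simp [sub_lt_iff_lt_add']

lemma measure_Ioi_eq_one_of_neg {μ : Measure ℝ} [IsProbabilityMeasure μ] (hμ : μ (Iio 0) = 0)
    {t : ℝ} (ht : t < 0) : μ (Ioi t) = 1 := by
  rw [← compl_Iic, prob_compl_eq_one_iff measurableSet_Iic]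
  exact measure_mono_null (Iic_subset_Iio.2 ht) hμ

section convPow

variable {μ : Measure ℝ}

lemma convPow_one [SFinite μ] : convPow μ 1 = μ := by
  simp [convPow]

variable [IsProbabilityMeasure μ]

instance (n : ℕ) : IsProbabilityMeasure (convPow μ n) := by
  induction n with
  | zero => rw [convPow]; infer_instance
  | succ n ih => rw [convPow]; infer_instance

lemma convPow_succ_apply_Ioi (n : ℕ) (u : ℝ) :
    convPow μ (n + 1) (Ioi u) = ∫⁻ x in Iic u, convPow μ n (Ioi (u - x)) ∂μ
      + ∫⁻ x in Ioi u, convPow μ n (Ioi (u - x)) ∂μ := by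
  rw [convPow, Measure.conv_comm, Measure.conv_apply_Ioi,
    ← lintegral_add_compl _ measurableSet_Iic, compl_Iic]

lemma convPow_succ_apply_Ioi_le (n : ℕ) (u : ℝ) :
    convPow μ (n + 1) (Ioi u) ≤ ∫⁻ x in Iic u, convPow μ n (Ioi (u - x)) ∂μ + μ (Ioi u) := by
  rw [convPow_succ_apply_Ioi]
  gcongr
  calc ∫⁻ x in Ioi u, convPow μ n (Ioi (u - x)) ∂μ ≤ ∫⁻ _ in Ioi u, 1 ∂μ :=
        lintegral_mono fun _ => prob_le_one
    _ = μ (Ioi u) := setLIntegral_one _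

lemma convPow_two_apply_Ioi (hμ : μ (Iio 0) = 0) (u : ℝ) :
    convPow μ 2 (Ioi u) = ∫⁻ x in Iic u, μ (Ioi (u - x)) ∂μ + μ (Ioi u) := by
  rw [convPow_succ_apply_Ioi, convPow_one,
    setLIntegral_congr_fun measurableSet_Ioi
      fun x hx => measure_Ioi_eq_one_of_neg hμ (sub_neg.2 hx), setLIntegral_one]

end convPow

section tailRatioSup

variable {μ : Measure ℝ}

lemma tailRatioSup_le {n : ℕ} {c : ℝ≥0∞}
    (h : ∀ u : ℝ, 0 ≤ u → convPow μ n (Ioi u) ≤ c * μ (Ioi u)) : tailRatioSup μ n ≤ c :=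
  iSup_le fun u => ENNReal.div_le_of_le_mul (h u.1 u.2)

lemma tailRatioSup_one_le [SFinite μ] : tailRatioSup μ 1 ≤ 1 :=
  iSup_le fun _ => by rw [convPow_one]; exact ENNReal.div_self_le_one

variable [IsProbabilityMeasure μ]

lemma convPow_apply_Ioi_le_tailRatioSup_mul (hpos : ∀ u : ℝ, 0 ≤ u → μ (Ioi u) ≠ 0) (n : ℕ)
    {u : ℝ} (hu : 0 ≤ u) : convPow μ n (Ioi u) ≤ tailRatioSup μ n * μ (Ioi u) :=
  (ENNReal.div_le_iff (hpos u hu) (measure_ne_top μ _)).1 <|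
    le_iSup (fun v : {v : ℝ // 0 ≤ v} => convPow μ n (Ioi v.1) / μ (Ioi v.1)) ⟨u, hu⟩

lemma setLIntegral_Iic_measure_Ioi_sub_le (hμ : μ (Iio 0) = 0)
    (hpos : ∀ u : ℝ, 0 ≤ u → μ (Ioi u) ≠ 0) {u : ℝ} (hu : 0 ≤ u) :
    ∫⁻ x in Iic u, μ (Ioi (u - x)) ∂μ ≤ (tailRatioSup μ 2 - 1) * μ (Ioi u) := by
  rw [ENNReal.sub_mul fun _ _ => measure_ne_top μ _, one_mul]
  refine (ENNReal.cancel_of_ne (measure_ne_top μ _)).le_tsub_of_add_le_right ?_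
  rw [← convPow_two_apply_Ioi hμ]
  exact convPow_apply_Ioi_le_tailRatioSup_mul hpos 2 hu

theorem tailRatioSup_succ_le (hμ : μ (Iio 0) = 0) (hpos : ∀ u : ℝ, 0 ≤ u → μ (Ioi u) ≠ 0)
    (n : ℕ) : tailRatioSup μ (n + 1) ≤ 1 + tailRatioSup μ n * (tailRatioSup μ 2 - 1) := by
  refine tailRatioSup_le fun u hu => ?_
  have hmono : Monotone fun x : ℝ => μ (Ioi (u - x)) := fun x y hxy =>
    measure_mono (Ioi_subset_Ioi (by linarith))
  calc convPow μ (n + 1) (Ioi u)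
      ≤ ∫⁻ x in Iic u, convPow μ n (Ioi (u - x)) ∂μ + μ (Ioi u) := convPow_succ_apply_Ioi_le n u
    _ ≤ ∫⁻ x in Iic u, tailRatioSup μ n * μ (Ioi (u - x)) ∂μ + μ (Ioi u) := by
        refine add_le_add_left (setLIntegral_mono (hmono.measurable.const_mul _) fun x hx => ?_) _
        exact convPow_apply_Ioi_le_tailRatioSup_mul hpos n (sub_nonneg.2 hx)
    _ = tailRatioSup μ n * ∫⁻ x in Iic u, μ (Ioi (u - x)) ∂μ + μ (Ioi u) := by
        rw [lintegral_const_mul _ hmono.measurable]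
    _ ≤ tailRatioSup μ n * ((tailRatioSup μ 2 - 1) * μ (Ioi u)) + μ (Ioi u) := by
        gcongr
        exact setLIntegral_Iic_measure_Ioi_sub_le hμ hpos hu
    _ = (1 + tailRatioSup μ n * (tailRatioSup μ 2 - 1)) * μ (Ioi u) := by ring

end tailRatioSup

lemma ENNReal.le_pow_of_le_one_add_mul_tsub_one {a : ℕ → ℝ≥0∞} {c : ℝ≥0∞} (hc : 1 ≤ c)
    (h₁ : a 1 ≤ 1) (hrec : ∀ n, 1 ≤ n → a (n + 1) ≤ 1 + a n * (c - 1)) :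
    ∀ n, 1 ≤ n → a n ≤ c ^ n := by
  refine Nat.le_induction (by simpa using h₁.trans hc) fun n hn ih => ?_
  calc a (n + 1) ≤ 1 + c ^ n * (c - 1) := (hrec n hn).trans (by gcongr)
    _ ≤ c ^ n + c ^ n * (c - 1) := by gcongr; exact one_le_pow₀ hc
    _ = c ^ (n + 1) := by rw [← mul_one_add, add_tsub_cancel_of_le hc, pow_succ]

theorem kesten_recursion_general
    (F : Measure ℝ) [IsProbabilityMeasure F] (hsupp : F (Set.Iio 0) = 0)
    (hpos : ∀ u : ℝ, 0 ≤ u → F (Set.Ioi u) ≠ 0)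
    (α : ℕ → ℝ≥0∞)
    (hα : ∀ n, α n = ⨆ u : {u : ℝ // 0 ≤ u},
      convPow F n (Set.Ioi u.1) / F (Set.Ioi u.1))
    (hα2ge : 2 ≤ α 2) :
    (∀ n : ℕ, 1 ≤ n → α (n + 1) ≤ 1 + α n * (α 2 - 1)) ∧
    (∀ n : ℕ, 1 ≤ n → α n ≤ (α 2) ^ n) := by
  obtain rfl : α = tailRatioSup F := funext hα
  have hrec (n : ℕ) (_ : 1 ≤ n) :
      tailRatioSup F (n + 1) ≤ 1 + tailRatioSup F n * (tailRatioSup F 2 - 1) :=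
    tailRatioSup_succ_le hsupp hpos n
  exact ⟨hrec, ENNReal.le_pow_of_le_one_add_mul_tsub_one (one_le_two.trans hα2ge)
    tailRatioSup_one_le hrec⟩

/-- Kesten-type recursion: with `αₙ = sup_{u ≥ 0} (1 - F^{*n}(u))/(1 - F(u))`,
if `α₂ < ∞` and `α₂ ≥ 2` then `α_{n+1} ≤ 1 + αₙ(α₂ - 1)` and hence `αₙ ≤ α₂ⁿ`. -/
theorem kesten_recursion
    (F : Measure ℝ) [IsProbabilityMeasure F] (hsupp : F (Set.Iio 0) = 0)
    (hpos : ∀ u : ℝ, 0 ≤ u → F (Set.Ioi u) ≠ 0)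
    (α : ℕ → ℝ≥0∞)
    (hα : ∀ n, α n = ⨆ u : {u : ℝ // 0 ≤ u},
      convPow F n (Set.Ioi u.1) / F (Set.Ioi u.1))
    (hα2fin : α 2 < ⊤) (hα2ge : 2 ≤ α 2) :
    (∀ n : ℕ, 1 ≤ n → α (n + 1) ≤ 1 + α n * (α 2 - 1)) ∧
    (∀ n : ℕ, 1 ≤ n → α n ≤ (α 2) ^ n) :=
  kesten_recursion_general F hsupp hpos α hα hα2ge
end

section
/- Let λ > 0, ε ∈ (0,1), and let b(s), c(s) be Laplace–Stieltjes transforms of nonnegative random variables B and C. Let T be a nonnegative random variable with LST τ(s) = E[e^{-sT}]. Define the (time-averaged corrected discard) quantity A(x) = ∫₀^∞ e^{-λεt} P(S_{N_P(t)} > x) dP(T≤t) + ∫₀^∞ (1-e^{-λεt}) P(S_{N_P(t)} + C > x) dP(T≤t), where S_{N_P(t)} is a compound Poisson sum with rate λ(1-ε)t and jump LST b(s), independent of C. Then for s > 0 the Laplace transform of x ↦ A(x), ∫₀^∞ e^{-sx} A(x) dx, equals 1/s − ((1−c(s))/s)·τ(λ(1−(1−ε)b(s))) − (c(s)/s)·τ(λ(1−ε)(1−b(s))).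 -/
open MeasureTheory Filter Set

private lemma exp_integrable_nu (ν : Measure ℝ) [IsProbabilityMeasure ν]
    (hae : ∀ᵐ t ∂ν, 0 ≤ t) {r : ℝ} (hr : 0 ≤ r) :
    Integrable (fun t => Real.exp (-(r * t))) ν := by
  refine (integrable_const (1 : ℝ)).mono' ?_ ?_
  · exact (Real.measurable_exp.comp ((measurable_id.const_mul r).neg)).aestronglyMeasurable
  · filter_upwards [hae] with t ht
    rw [Real.norm_eq_abs, abs_of_pos (Real.exp_pos _)]
    calc Real.exp (-(r * t)) ≤ Real.exp 0 := Real.exp_le_exp.mpr (by nlinarith)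
    _ = 1 := Real.exp_zero

private lemma swap_int (s : ℝ) (hs : 0 < s) (ν : Measure ℝ) [IsProbabilityMeasure ν]
    (h : ℝ → ℝ → ℝ) (hmeas : Measurable (Function.uncurry h))
    (hbd : ∀ t x, |h t x| ≤ 1) :
    ∫ x in Set.Ioi (0:ℝ), ∫ t, Real.exp (-s * x) * h t x ∂ν
      = ∫ t, (∫ x in Set.Ioi (0:ℝ), Real.exp (-s * x) * h t x) ∂ν := by
  have hm : Measurable fun p : ℝ × ℝ => Real.exp (-s * p.1) * h p.2 p.1 :=
    (Real.measurable_exp.comp (measurable_fst.const_mul (-s))).mul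
      (hmeas.comp measurable_swap)
  have hint : Integrable (fun p : ℝ × ℝ => Real.exp (-s * p.1) * h p.2 p.1)
      ((volume.restrict (Set.Ioi 0)).prod ν) := by
    refine (integrable_prod_iff hm.aestronglyMeasurable).mpr ⟨?_, ?_⟩
    · refine Eventually.of_forall fun x => ?_
      refine (integrable_const (Real.exp (-s * x))).mono' ?_ ?_
      · exact ((Real.measurable_exp.comp (measurable_const.const_mul (-s))).mul
          (hmeas.comp (measurable_id.prodMk measurable_const))).aestronglyMeasurable
      · refine Eventually.of_forall fun t => ?_
        rw [Real.norm_eq_abs, abs_mul, abs_of_pos (Real.exp_pos _)]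
        calc Real.exp (-s * x) * |h t x| ≤ Real.exp (-s * x) * 1 :=
          mul_le_mul_of_nonneg_left (hbd t x) (Real.exp_pos _).le
        _ = Real.exp (-s * x) := mul_one _
    · refine (exp_neg_integrableOn_Ioi 0 hs).mono' ?_ ?_
      · exact (hm.norm.stronglyMeasurable.integral_prod_right').aestronglyMeasurable
      · refine Eventually.of_forall fun x => ?_
        rw [Real.norm_eq_abs, abs_of_nonneg (integral_nonneg fun t => norm_nonneg _)]
        have hib : Integrable (fun t => ‖Real.exp (-s * x) * h t x‖) ν := by
          refine (integrable_const (Real.exp (-s * x))).mono' ?_ ?_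
          · exact ((Real.measurable_exp.comp (measurable_const.const_mul (-s))).mul
              (hmeas.comp (measurable_id.prodMk measurable_const))).norm.aestronglyMeasurable
          · refine Eventually.of_forall fun t => ?_
            rw [norm_norm, Real.norm_eq_abs, abs_mul, abs_of_pos (Real.exp_pos _)]
            calc Real.exp (-s * x) * |h t x| ≤ Real.exp (-s * x) * 1 :=
              mul_le_mul_of_nonneg_left (hbd t x) (Real.exp_pos _).le
            _ = Real.exp (-s * x) := mul_one _
        calc (∫ t, ‖Real.exp (-s * x) * h t x‖ ∂ν)
            ≤ ∫ _t, Real.exp (-s * x) ∂ν := by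
              refine integral_mono hib (integrable_const _) fun t => ?_
              rw [Real.norm_eq_abs, abs_mul, abs_of_pos (Real.exp_pos _)]
              calc Real.exp (-s * x) * |h t x| ≤ Real.exp (-s * x) * 1 :=
                mul_le_mul_of_nonneg_left (hbd t x) (Real.exp_pos _).le
              _ = Real.exp (-s * x) := mul_one _
          _ = Real.exp (-s * x) := by simp
  exact integral_integral_swap (f := fun x t => Real.exp (-s * x) * h t x) hint

/-- Laplace transform of the corrected discard approximation of the aggregate
loss over a random horizon `T` (Theorem "LST mixed poisson").
`F t x = P(S_{N_P(t)} > x)` is the tail of the compound Poisson sum with rate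
`λ(1-ε)t` and jump Laplace transform `b`, `G t x = P(S_{N_P(t)} + C > x)`,
`τ` is the LST of `T`, and
`A(x) = ∫ e^{-λεt} F t x dP_T(t) + ∫ (1-e^{-λεt}) G t x dP_T(t)`. -/
theorem lst_mixed_poisson
    (lam ε s : ℝ) (hlam : 0 < lam) (hε : ε ∈ Set.Ioo (0 : ℝ) 1) (hs : 0 < s)
    (ν : Measure ℝ) [IsProbabilityMeasure ν] (hνsupp : ν (Set.Iio 0) = 0)
    (b c τ : ℝ → ℝ)
    (hb : ∀ r : ℝ, 0 ≤ r → 0 < b r ∧ b r ≤ 1)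
    (hc : ∀ r : ℝ, 0 ≤ r → 0 < c r ∧ c r ≤ 1)
    (hτ : ∀ r : ℝ, 0 ≤ r → τ r = ∫ t, Real.exp (-r * t) ∂ν)
    (F G : ℝ → ℝ → ℝ)
    (hFmeas : Measurable (Function.uncurry F))
    (hGmeas : Measurable (Function.uncurry G))
    (hFbd : ∀ t x : ℝ, 0 ≤ F t x ∧ F t x ≤ 1)
    (hGbd : ∀ t x : ℝ, 0 ≤ G t x ∧ G t x ≤ 1)
    (hF : ∀ t : ℝ, 0 ≤ t →
      ∫ x in Set.Ioi (0 : ℝ), Real.exp (-s * x) * F t x =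
        (1 - Real.exp (-(lam * (1 - ε) * t * (1 - b s)))) / s)
    (hG : ∀ t : ℝ, 0 ≤ t →
      ∫ x in Set.Ioi (0 : ℝ), Real.exp (-s * x) * G t x =
        (1 - Real.exp (-(lam * (1 - ε) * t * (1 - b s))) * c s) / s)
    (A : ℝ → ℝ)
    (hA : ∀ x : ℝ, A x =
      (∫ t, Real.exp (-(lam * ε * t)) * F t x ∂ν) +
        ∫ t, (1 - Real.exp (-(lam * ε * t))) * G t x ∂ν) :
    ∫ x in Set.Ioi (0 : ℝ), Real.exp (-s * x) * A x =
      1 / s - ((1 - c s) / s) * τ (lam * (1 - (1 - ε) * b s)) -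
        (c s / s) * τ (lam * (1 - ε) * (1 - b s)) := by
  obtain ⟨hε0, hε1⟩ := hε
  obtain ⟨hbs0, hbs1⟩ := hb s hs.le
  obtain ⟨hcs0, hcs1⟩ := hc s hs.le
  have hae : ∀ᵐ t ∂ν, (0 : ℝ) ≤ t := by
    rw [ae_iff]
    convert hνsupp using 2
    ext t; simp [Set.mem_Iio, not_le]
  -- the combined kernel
  set H : ℝ → ℝ → ℝ := fun t x =>
    Real.exp (-(lam * ε * |t|)) * F t x + (1 - Real.exp (-(lam * ε * |t|))) * G t x with hHdef
  have hEm : Measurable fun t : ℝ => Real.exp (-(lam * ε * |t|)) :=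
    Real.measurable_exp.comp ((measurable_abs.const_mul (lam * ε)).neg)
  have hEbd : ∀ t : ℝ, 0 < Real.exp (-(lam * ε * |t|)) ∧ Real.exp (-(lam * ε * |t|)) ≤ 1 := by
    intro t
    refine ⟨Real.exp_pos _, ?_⟩
    calc Real.exp (-(lam * ε * |t|)) ≤ Real.exp 0 := by
          apply Real.exp_le_exp.mpr
          have : 0 ≤ lam * ε * |t| := by positivity
          linarith
      _ = 1 := Real.exp_zero
  have hHmeas : Measurable (Function.uncurry H) := by
    have em : Measurable fun p : ℝ × ℝ => Real.exp (-(lam * ε * |p.1|)) :=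
      Real.measurable_exp.comp ((measurable_fst.abs.const_mul (lam * ε)).neg)
    exact (em.mul hFmeas).add ((measurable_const.sub em).mul hGmeas)
  have hHbd : ∀ t x, |H t x| ≤ 1 := by
    intro t x
    obtain ⟨he0, he1⟩ := hEbd t
    obtain ⟨hf0, hf1⟩ := hFbd t x
    obtain ⟨hg0, hg1⟩ := hGbd t x
    rw [abs_le]
    constructor <;> simp only [hHdef] <;> nlinarith
  -- Step 1 : A x = ∫ t, H t x ∂ν
  have hAeq : ∀ x : ℝ, A x = ∫ t, H t x ∂ν := by
    intro x
    have hFm : Measurable fun t => F t x :=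
      hFmeas.comp (measurable_id.prodMk measurable_const)
    have hGm : Measurable fun t => G t x :=
      hGmeas.comp (measurable_id.prodMk measurable_const)
    have e1 : Integrable (fun t => Real.exp (-(lam * ε * |t|)) * F t x) ν := by
      refine (integrable_const (1 : ℝ)).mono' (hEm.mul hFm).aestronglyMeasurable ?_
      refine Eventually.of_forall fun t => ?_
      obtain ⟨he0, he1⟩ := hEbd t
      obtain ⟨hf0, hf1⟩ := hFbd t x
      rw [Real.norm_eq_abs, abs_mul, abs_of_pos he0, abs_of_nonneg hf0]
      nlinarith
    have e2 : Integrable (fun t => (1 - Real.exp (-(lam * ε * |t|))) * G t x) ν := by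
      refine (integrable_const (1 : ℝ)).mono'
        ((measurable_const.sub hEm).mul hGm).aestronglyMeasurable ?_
      refine Eventually.of_forall fun t => ?_
      obtain ⟨he0, he1⟩ := hEbd t
      obtain ⟨hg0, hg1⟩ := hGbd t x
      rw [Real.norm_eq_abs, abs_mul, abs_of_nonneg (by linarith), abs_of_nonneg hg0]
      nlinarith
    rw [hA x]
    have c1 : (∫ t, Real.exp (-(lam * ε * t)) * F t x ∂ν)
        = ∫ t, Real.exp (-(lam * ε * |t|)) * F t x ∂ν := by
      refine integral_congr_ae ?_
      filter_upwards [hae] with t ht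
      rw [abs_of_nonneg ht]
    have c2 : (∫ t, (1 - Real.exp (-(lam * ε * t))) * G t x ∂ν)
        = ∫ t, (1 - Real.exp (-(lam * ε * |t|))) * G t x ∂ν := by
      refine integral_congr_ae ?_
      filter_upwards [hae] with t ht
      rw [abs_of_nonneg ht]
    rw [c1, c2, ← integral_add e1 e2]
  -- Step 2 : pull the exponential inside and swap
  have step2 : ∫ x in Set.Ioi (0:ℝ), Real.exp (-s * x) * A x
      = ∫ t, (∫ x in Set.Ioi (0:ℝ), Real.exp (-s * x) * H t x) ∂ν := by
    rw [← swap_int s hs ν H hHmeas hHbd]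
    refine setIntegral_congr_fun measurableSet_Ioi fun x _ => ?_
    rw [hAeq x, ← integral_const_mul]
  rw [step2]
  set r₁ : ℝ := lam * (1 - (1 - ε) * b s) with hr₁def
  set r₂ : ℝ := lam * (1 - ε) * (1 - b s) with hr₂def
  have hr₁ : 0 ≤ r₁ := by
    rw [hr₁def]
    have h1 : (1 - ε) * b s ≤ (1 - ε) * 1 :=
      mul_le_mul_of_nonneg_left hbs1 (by linarith)
    nlinarith
  have hr₂ : 0 ≤ r₂ := by
    rw [hr₂def]
    have : (0:ℝ) ≤ lam * (1 - ε) := by nlinarith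
    nlinarith
  -- Step 3 : compute the inner integral for a.e. t
  have step3 : ∀ᵐ t ∂ν, (∫ x in Set.Ioi (0:ℝ), Real.exp (-s * x) * H t x)
      = (1 - (1 - c s) * Real.exp (-(r₁ * t)) - c s * Real.exp (-(r₂ * t))) / s := by
    filter_upwards [hae] with t ht
    have habs : |t| = t := abs_of_nonneg ht
    have hFm : Measurable fun x => F t x :=
      hFmeas.comp (measurable_const.prodMk measurable_id)
    have hGm : Measurable fun x => G t x :=
      hGmeas.comp (measurable_const.prodMk measurable_id)
    have iF : IntegrableOn (fun x => Real.exp (-s * x) * F t x) (Set.Ioi (0:ℝ)) := by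
      refine (exp_neg_integrableOn_Ioi 0 hs).mono'
        ((Real.measurable_exp.comp (measurable_id.const_mul (-s))).mul
          hFm).aestronglyMeasurable ?_
      refine Eventually.of_forall fun x => ?_
      obtain ⟨hf0, hf1⟩ := hFbd t x
      rw [Real.norm_eq_abs, abs_mul, abs_of_pos (Real.exp_pos _), abs_of_nonneg hf0]
      nlinarith [Real.exp_pos (-s * x)]
    have iG : IntegrableOn (fun x => Real.exp (-s * x) * G t x) (Set.Ioi (0:ℝ)) := by
      refine (exp_neg_integrableOn_Ioi 0 hs).mono'
        ((Real.measurable_exp.comp (measurable_id.const_mul (-s))).mul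
          hGm).aestronglyMeasurable ?_
      refine Eventually.of_forall fun x => ?_
      obtain ⟨hg0, hg1⟩ := hGbd t x
      rw [Real.norm_eq_abs, abs_mul, abs_of_pos (Real.exp_pos _), abs_of_nonneg hg0]
      nlinarith [Real.exp_pos (-s * x)]
    have expand : (fun x => Real.exp (-s * x) * H t x)
        = fun x => Real.exp (-(lam * ε * t)) * (Real.exp (-s * x) * F t x)
            + (1 - Real.exp (-(lam * ε * t))) * (Real.exp (-s * x) * G t x) := by
      funext x
      simp only [hHdef, habs]
      ring
    rw [expand, integral_add (iF.const_mul _) (iG.const_mul _),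
      integral_const_mul, integral_const_mul, hF t ht, hG t ht]
    have hZ : Real.exp (-(lam * (1 - ε) * t * (1 - b s))) = Real.exp (-(r₂ * t)) := by
      congr 1
      rw [hr₂def]; ring
    have hY : Real.exp (-(lam * ε * t)) * Real.exp (-(r₂ * t)) = Real.exp (-(r₁ * t)) := by
      rw [← Real.exp_add]
      congr 1
      rw [hr₁def, hr₂def]; ring
    rw [hZ]
    field_simp
    rw [mul_comm t r₁, mul_comm t r₂]
    nlinarith [hY, Real.exp_pos (-(lam * ε * t)), Real.exp_pos (-(r₂ * t))]
  have step3' : (∫ t, (∫ x in Set.Ioi (0:ℝ), Real.exp (-s * x) * H t x) ∂ν)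
      = ∫ t, (1 - (1 - c s) * Real.exp (-(r₁ * t)) - c s * Real.exp (-(r₂ * t))) / s ∂ν :=
    integral_congr_ae step3
  rw [step3']
  -- Step 4 : final computation
  have i1 : Integrable (fun t => Real.exp (-(r₁ * t))) ν := exp_integrable_nu ν hae hr₁
  have i2 : Integrable (fun t => Real.exp (-(r₂ * t))) ν := exp_integrable_nu ν hae hr₂
  have expand2 : (fun t => (1 - (1 - c s) * Real.exp (-(r₁ * t))
        - c s * Real.exp (-(r₂ * t))) / s)
      = fun t => (1/s : ℝ) - ((1 - c s)/s) * Real.exp (-(r₁ * t))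
          - (c s/s) * Real.exp (-(r₂ * t)) := by
    funext t; ring
  have ia : Integrable (fun t => (1/s : ℝ) - ((1 - c s)/s) * Real.exp (-(r₁ * t))) ν :=
    (integrable_const _).sub (i1.const_mul _)
  have ib : Integrable (fun _t : ℝ => (1/s : ℝ)) ν := integrable_const _
  rw [expand2, integral_sub ia (i2.const_mul _), integral_sub ib (i1.const_mul _),
    integral_const_mul, integral_const_mul, integral_const,
    hτ r₁ hr₁, hτ r₂ hr₂]
  simp [neg_mul, measure_univ]
end
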